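/- Let ℓ and p be primes, let K be a finite extension of ℚ_p, and let L/K be a cyclic Galois extension whose degree is a power of ℓ, with Galois group G = Gal(L/K). Let D := ∩_k (L^×)^{ℓ^k} be the ℓ-divisible part of L^× (a G-stable subgroup). Then Ĥ^0(G, D) = 1 and Ĥ^{-1}(G, D) = 1; in particular every element of D fixed by G is the norm of an element of D. -/

import Mathlib

/-! ### Tate cohomology in degrees 0 and -1 (multiplicative coefficients) -/

section TateMul
variable {G M : Type} [Group G] [CommGroup M]

/-- The subgroup of `G`-invariant elements. -/
def mFixed (ρ : G → (M →* M)) : Subgroup M where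
  carrier := {x | ∀ g, ρ g x = x}
  one_mem' := fun g => map_one (ρ g)
  mul_mem' := fun {a b} ha hb g => by rw [map_mul, ha g, hb g]
  inv_mem' := fun {a} ha g => by rw [map_inv, ha g]

variable [Fintype G]

/-- The norm map `m ↦ ∏_{σ ∈ G} σ(m)`. -/
def mNorm (ρ : G → (M →* M)) : M →* M := ∏ g : G, ρ g

/-- The augmentation subgroup `I_G M`, generated by the elements `σ(m) * m⁻¹`. -/
def mAug (ρ : G → (M →* M)) : Subgroup M :=
  Subgroup.closure {x | ∃ g m, x = ρ g m * m⁻¹}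

/-- Tate cohomology `Ĥ⁰(G, M) = M^G / N_G(M)`. -/
def tateH0 (ρ : G → (M →* M)) : Type :=
  mFixed ρ ⧸ ((mNorm ρ).range.subgroupOf (mFixed ρ))

/-- Tate cohomology `Ĥ⁻¹(G, M) = ker N_G / I_G M`. -/
def tateHm1 (ρ : G → (M →* M)) : Type :=
  (mNorm ρ).ker ⧸ ((mAug ρ).subgroupOf (mNorm ρ).ker)

end TateMul

/-! ### The ℓ-adification `lim_k M/M^{ℓ^k}` of a commutative group `M` -/

section Adic
variable (ℓ : ℕ)

/-- The subgroup of `ℓ^k`-th powers. -/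
def powSub (M : Type) [CommGroup M] (k : ℕ) : Subgroup M :=
  (powMonoidHom (ℓ ^ k) : M →* M).range

lemma powSub_succ_le (M : Type) [CommGroup M] (k : ℕ) :
    powSub ℓ M (k + 1) ≤ powSub ℓ M k := by
  rintro x ⟨y, rfl⟩
  exact ⟨y ^ ℓ, by simp only [powMonoidHom_apply, ← pow_mul, ← pow_succ']⟩

/-- The transition maps of the inverse system `k ↦ M/M^{ℓ^k}`. -/
def adicTrans (M : Type) [CommGroup M] (k : ℕ) :
    (M ⧸ powSub ℓ M (k + 1)) →* (M ⧸ powSub ℓ M k) :=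
  QuotientGroup.map _ _ (MonoidHom.id M) (fun _ hx => powSub_succ_le ℓ M k hx)

/-- The ℓ-adification `lim_k M/M^{ℓ^k}` as a subgroup of the product. -/
def adicSub (M : Type) [CommGroup M] : Subgroup (∀ k, M ⧸ powSub ℓ M k) where
  carrier := {f | ∀ k, adicTrans ℓ M k (f (k + 1)) = f k}
  one_mem' := fun k => map_one _
  mul_mem' := fun {a b} ha hb k => by
    rw [Pi.mul_apply, Pi.mul_apply, map_mul, ha k, hb k]
  inv_mem' := fun {a} ha k => by
    rw [Pi.inv_apply, Pi.inv_apply, map_inv, ha k]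

/-- The ℓ-adification `lim_k M/M^{ℓ^k}` of a commutative group `M`. -/
abbrev Adic (M : Type) [CommGroup M] : Type := ↥(adicSub ℓ M)

lemma adic_prop {M : Type} [CommGroup M] (x : Adic ℓ M) (k : ℕ) :
    adicTrans ℓ M k (x.1 (k + 1)) = x.1 k := x.2 k

/-- The map on level-`k` quotients induced by a group homomorphism. -/
def levelMap {M N : Type} [CommGroup M] [CommGroup N] (f : M →* N) (k : ℕ) :
    (M ⧸ powSub ℓ M k) →* (N ⧸ powSub ℓ N k) :=
  QuotientGroup.map _ _ f (by
    rintro x ⟨y, rfl⟩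
    exact ⟨f y, by simp only [powMonoidHom_apply, map_pow]⟩)

lemma levelMap_trans {M N : Type} [CommGroup M] [CommGroup N] (f : M →* N) (k : ℕ)
    (x : M ⧸ powSub ℓ M (k + 1)) :
    adicTrans ℓ N k (levelMap ℓ f (k + 1) x) = levelMap ℓ f k (adicTrans ℓ M k x) := by
  refine QuotientGroup.induction_on x fun m => ?_
  rfl

/-- The map on ℓ-adifications induced by a group homomorphism. -/
def adicMap {M N : Type} [CommGroup M] [CommGroup N] (f : M →* N) :
    Adic ℓ M →* Adic ℓ N where
  toFun x := ⟨fun k => levelMap ℓ f k (x.1 k), fun k => by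
    rw [levelMap_trans]; exact congrArg _ (adic_prop ℓ x k)⟩
  map_one' := by
    apply Subtype.ext; funext k; exact map_one _
  map_mul' := fun a b => by
    apply Subtype.ext; funext k; exact map_mul _ _ _

/-- The canonical map `M → lim_k M/M^{ℓ^k}`. -/
def adicOf (M : Type) [CommGroup M] : M →* Adic ℓ M where
  toFun x := ⟨fun k => (x : M ⧸ powSub ℓ M k), fun k => rfl⟩
  map_one' := by apply Subtype.ext; funext k; rfl
  map_mul' := fun a b => by apply Subtype.ext; funext k; rfl

end Adic

/-- The action of a field automorphism on the unit group. -/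
def galUnits {K L : Type} [Field K] [Field L] [Algebra K L] (σ : L ≃ₐ[K] L) : Lˣ →* Lˣ :=
  Units.map (σ : L →* L)

/-- The `ℓ`-divisible part `⋂_k (L^×)^{ℓ^k}` of `L^×`. -/
def divPart (ℓ : ℕ) (L : Type) [Field L] : Subgroup Lˣ := ⨅ k : ℕ, powSub ℓ Lˣ k

lemma galUnits_divPart_mem (ℓ : ℕ) {K L : Type} [Field K] [Field L] [Algebra K L]
    (σ : L ≃ₐ[K] L) {x : Lˣ} (hx : x ∈ divPart ℓ L) : galUnits σ x ∈ divPart ℓ L := by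
  rw [divPart, Subgroup.mem_iInf] at hx ⊢
  intro k
  obtain ⟨y, hy⟩ := hx k
  exact ⟨galUnits σ y, by
    rw [powMonoidHom_apply] at hy ⊢
    rw [← map_pow, hy]⟩

/-- The action of the Galois group on the `ℓ`-divisible part of `L^×`. -/
def galDiv (ℓ : ℕ) {K L : Type} [Field K] [Field L] [Algebra K L] (σ : L ≃ₐ[K] L) :
    ↥(divPart ℓ L) →* ↥(divPart ℓ L) :=
  ((galUnits σ).domRestrict (divPart ℓ L)).codRestrict _
    (fun x => galUnits_divPart_mem ℓ σ x.2)

/-! The `ℓ`-divisible part `D` is uniquely `ℓ`-divisible. It is divisible because an element of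
`L^×` has only finitely many `ℓ`-th roots, so one of them is an `ℓ^k`-th power for every `k`. It
is `ℓ`-torsion-free because the `ℓ`-power roots of unity of `L` have bounded order: if `ζ` has
order `ℓ^j`, then `ζ^a - ζ^b` is a unit times `ζ^c - 1`, which divides `ℓ`, hence is not divisible
by `p^2`; so the powers of `ζ` are distinct modulo `p^2` in the free `ℤ_p`-module `ℤ_p[ζ]`, whose
rank is at most `[L : ℚ_p]`. Consequently raising to the power `|G| = ℓ^m` is an automorphism of
`D`, and this kills both Tate groups: a fixed `x` is the norm of its fixed `|G|`-th root, and
`y^|G|` agrees with `N(y)` modulo `I_G D`. -/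

section TateTrivial

variable {G M : Type} [CommGroup M] [Fintype G]

lemma mNorm_apply (ρ : G → (M →* M)) (x : M) : mNorm ρ x = ∏ g, ρ g x :=
  MonoidHom.finsetProd_apply ρ Finset.univ x

lemma mNorm_eq_pow_of_mem_mFixed {ρ : G → (M →* M)} {x : M} (hx : x ∈ mFixed ρ) :
    mNorm ρ x = x ^ Fintype.card G := by
  rw [mNorm_apply, Finset.prod_congr rfl fun g _ => hx g, Finset.prod_const, Finset.card_univ]

lemma pow_card_mul_inv_mNorm_mem_mAug (ρ : G → (M →* M)) (x : M) :
    x ^ Fintype.card G * (mNorm ρ x)⁻¹ ∈ mAug ρ := by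
  have : x ^ Fintype.card G * (mNorm ρ x)⁻¹ = ∏ g, (ρ g x * x⁻¹)⁻¹ := by
    rw [Finset.prod_inv_distrib, Finset.prod_mul_distrib, mNorm_apply, Finset.prod_const,
      Finset.card_univ, inv_pow, mul_inv, inv_inv, mul_comm]
  rw [this]
  exact Subgroup.prod_mem _ fun g _ => (mAug ρ).inv_mem (Subgroup.subset_closure ⟨g, x, rfl⟩)

lemma mFixed_le_range_mNorm {ρ : G → (M →* M)}
    (hbij : Function.Bijective (powMonoidHom (Fintype.card G) : M →* M)) :
    mFixed ρ ≤ (mNorm ρ).range := by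
  intro x hx
  obtain ⟨y, rfl⟩ := hbij.2 x
  have hy : y ∈ mFixed ρ := fun g => hbij.1 (by
    simp only [powMonoidHom_apply, ← map_pow]
    exact hx g)
  exact ⟨y, mNorm_eq_pow_of_mem_mFixed hy⟩

lemma ker_mNorm_le_mAug {ρ : G → (M →* M)}
    (hbij : Function.Bijective (powMonoidHom (Fintype.card G) : M →* M)) :
    (mNorm ρ).ker ≤ mAug ρ := by
  intro x hx
  obtain ⟨y, rfl⟩ := hbij.2 x
  have hy : mNorm ρ y = 1 := hbij.1 (by
    simp only [powMonoidHom_apply, ← map_pow, one_pow]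
    exact hx)
  simpa [hy] using pow_card_mul_inv_mNorm_mem_mAug ρ y

lemma natCard_tateH0_eq_one {ρ : G → (M →* M)}
    (hbij : Function.Bijective (powMonoidHom (Fintype.card G) : M →* M)) :
    Nat.card (tateH0 ρ) = 1 :=
  Subgroup.index_eq_one.mpr (Subgroup.subgroupOf_eq_top.mpr (mFixed_le_range_mNorm hbij))

lemma natCard_tateHm1_eq_one {ρ : G → (M →* M)}
    (hbij : Function.Bijective (powMonoidHom (Fintype.card G) : M →* M)) :
    Nat.card (tateHm1 ρ) = 1 :=
  Subgroup.index_eq_one.mpr (Subgroup.subgroupOf_eq_top.mpr (ker_mNorm_le_mAug hbij))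

end TateTrivial

section DivisiblePart

variable {M : Type} [CommGroup M] {n : ℕ}

lemma powSub_antitone : Antitone (powSub n M) :=
  antitone_nat_of_succ_le (powSub_succ_le n M)

lemma exists_pow_eq_of_mem_iInf_powSub (hfin : ∀ x : M, {y : M | y ^ n = x}.Finite) {x : M}
    (hx : x ∈ ⨅ k, powSub n M k) : ∃ y ∈ ⨅ k, powSub n M k, y ^ n = x := by
  have hroot : ∀ k, ∃ y : {y : M // y ^ n = x}, (y : M) ∈ powSub n M k := by
    intro k
    obtain ⟨w, hw⟩ := Subgroup.mem_iInf.mp hx (k + 1)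
    refine ⟨⟨w ^ n ^ k, ?_⟩, w, rfl⟩
    rw [← hw, powMonoidHom_apply, ← pow_mul, ← pow_succ]
  choose g hg using hroot
  have : Finite {y : M // y ^ n = x} := (hfin x).to_subtype
  obtain ⟨y, hy⟩ := Finite.exists_infinite_fiber g
  refine ⟨y, Subgroup.mem_iInf.mpr fun k => ?_, y.2⟩
  obtain ⟨k', hk', hkk'⟩ := (Set.infinite_coe_iff.mp hy).exists_gt k
  rw [← show g k' = y from hk']
  exact powSub_antitone hkk'.le (hg k')

lemma pow_surjective_iInf_powSub (hfin : ∀ x : M, {y : M | y ^ n = x}.Finite) :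
    Function.Surjective (powMonoidHom n : ↥(⨅ k, powSub n M k) →* _) := by
  rintro ⟨x, hx⟩
  obtain ⟨y, hy, hyx⟩ := exists_pow_eq_of_mem_iInf_powSub hfin hx
  exact ⟨⟨y, hy⟩, Subtype.ext hyx⟩

lemma pow_injective_iInf_powSub (hexp : ∃ B, ∀ z : M, ∀ j, z ^ n ^ j = 1 → z ^ n ^ B = 1) :
    Function.Injective (powMonoidHom n : ↥(⨅ k, powSub n M k) →* _) := by
  obtain ⟨B, hB⟩ := hexp
  refine (injective_iff_map_eq_one _).mpr fun ⟨x, hx⟩ hxn => Subtype.ext ?_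
  obtain ⟨z, rfl⟩ := Subgroup.mem_iInf.mp hx B
  refine hB z (B + 1) ?_
  rw [pow_succ, pow_mul]
  exact congrArg Subtype.val hxn

lemma Units.finite_setOf_pow_eq {L : Type} [Field L] (hn : 0 < n) (x : Lˣ) :
    {y : Lˣ | y ^ n = x}.Finite := by
  refine ((Polynomial.nthRoots n (x : L)).finite_toSet.preimage
    Units.val_injective.injOn).subset fun y hy => ?_
  simp [Polynomial.mem_nthRoots hn, ← Units.val_pow_eq_pow_val, show y ^ n = x from hy]

end DivisiblePart

lemma sub_one_dvd_natCast_of_pow_pow_eq_one {A : Type} [CommRing A] [IsDomain A] {ℓ : ℕ} :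
    ∀ {j : ℕ} {ζ : A}, ζ ^ ℓ ^ j = 1 → ζ ≠ 1 → ζ - 1 ∣ (ℓ : A)
  | 0, _, hζ, hζ1 => absurd (by simpa using hζ) hζ1
  | j + 1, ζ, hζ, hζ1 => by
    by_cases hζℓ : ζ ^ ℓ = 1
    · exact sub_one_dvd_natCast_of_pow_eq_one hζℓ hζ1
    · rw [pow_succ', pow_mul] at hζ
      have : ζ - 1 ∣ ζ ^ ℓ - 1 := by simpa using sub_dvd_pow_sub_pow ζ 1 ℓ
      exact this.trans (sub_one_dvd_natCast_of_pow_pow_eq_one hζ hζℓ)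

lemma not_sq_dvd_sub_one_of_pow_pow_eq_one {A : Type} [CommRing A] [IsDomain A] {p ℓ j : ℕ}
    (hp : p.Prime) (hℓ : ℓ.Prime) (hp0 : (p : A) ≠ 0) (hpu : ¬IsUnit (p : A)) {ζ : A}
    (hζ : ζ ^ ℓ ^ j = 1) (hζ1 : ζ ≠ 1) : ¬(p : A) ^ 2 ∣ ζ - 1 := by
  intro hdvd
  have hpℓ : (p : A) ^ 2 ∣ ℓ := hdvd.trans (sub_one_dvd_natCast_of_pow_pow_eq_one hζ hζ1)
  apply hpu
  rcases eq_or_ne ℓ p with rfl | hne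
  · obtain ⟨c, hc⟩ := hpℓ
    exact IsUnit.of_mul_eq_one c (mul_left_cancel₀ hp0 (by linear_combination -hc))
  · have hcop : IsCoprime (p : A) ℓ := by
      simpa only [map_natCast] using
        ((Nat.coprime_primes hp hℓ).mpr hne.symm).isCoprime.map (Int.castRingHom A)
    exact hcop.isUnit_of_dvd ((dvd_pow_self _ two_ne_zero).trans hpℓ)

lemma IsPrimitiveRoot.eq_of_sq_dvd_pow_sub_pow {A : Type} [CommRing A] [IsDomain A]
    {p ℓ j : ℕ} (hp : p.Prime) (hℓ : ℓ.Prime) (hp0 : (p : A) ≠ 0) (hpu : ¬IsUnit (p : A))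
    {ζ : A} (hζ : IsPrimitiveRoot ζ (ℓ ^ j)) {a b : ℕ} (ha : a < ℓ ^ j) (hb : b < ℓ ^ j)
    (h : (p : A) ^ 2 ∣ ζ ^ a - ζ ^ b) : a = b := by
  wlog hab : a ≤ b generalizing a b
  · exact (this hb ha (dvd_sub_comm.mp h) (le_of_not_ge hab)).symm
  by_contra hne
  have hζa : IsUnit (ζ ^ a) := (hζ.isUnit (pow_ne_zero j hℓ.ne_zero)).pow a
  have hsplit : ζ ^ a - ζ ^ b = -(ζ ^ a * (ζ ^ (b - a) - 1)) := by
    rw [mul_sub, ← pow_add, Nat.add_sub_cancel' hab]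
    ring
  rw [hsplit, dvd_neg, hζa.dvd_mul_left] at h
  have hroot : (ζ ^ (b - a)) ^ ℓ ^ j = 1 := by
    rw [← pow_mul, mul_comm, pow_mul, hζ.pow_eq_one, one_pow]
  exact not_sq_dvd_sub_one_of_pow_pow_eq_one hp hℓ hp0 hpu hroot
    (hζ.pow_ne_one_of_pos_of_lt (by omega) (by omega)) h

section Padic

variable {p : ℕ} [Fact p.Prime]

lemma not_isUnit_algebraMap_of_free {R S : Type} [CommRing R] [IsDomain R] [CommRing S]
    [Nontrivial S] [Algebra R S] [Module.Free R S] [Module.Finite R S] {r : R}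
    (hr : ¬IsUnit r) : ¬IsUnit (algebraMap R S r) := fun h => by
  have := h.map (Algebra.norm R)
  rw [Algebra.norm_algebraMap] at this
  exact hr ((isUnit_pow_iff Module.finrank_pos.ne').mp this)

lemma card_le_of_pow_dvd_sub_imp_eq {A ι α : Type} [CommRing A] [Algebra ℤ_[p] A]
    [Fintype ι] [Fintype α] (b : Module.Basis ι ℤ_[p] A) (k : ℕ) (f : α → A)
    (hf : ∀ a a', (p : A) ^ k ∣ f a - f a' → a = a') :
    Fintype.card α ≤ (p ^ k) ^ Fintype.card ι := by
  classical
  have : NeZero (p ^ k) := ⟨pow_ne_zero k (Fact.out : p.Prime).ne_zero⟩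
  let F : α → ι → ZMod (p ^ k) := fun a i => PadicInt.toZModPow k (b.repr (f a) i)
  have hF : F.Injective := by
    intro a a' haa'
    apply hf
    have hcoord : ∀ i, (p : ℤ_[p]) ^ k ∣ b.repr (f a - f a') i := fun i => by
      rw [← Ideal.mem_span_singleton, ← PadicInt.ker_toZModPow, RingHom.mem_ker, map_sub,
        Finsupp.sub_apply, map_sub, sub_eq_zero]
      exact congrFun haa' i
    choose c hc using hcoord
    refine ⟨∑ i, c i • b i, ?_⟩
    rw [← b.sum_repr (f a - f a')]
    simp only [hc, Finset.mul_sum, Algebra.smul_def, map_mul, map_pow, map_natCast, mul_assoc]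
  simpa using Fintype.card_le_of_injective F hF

lemma IsPrimitiveRoot.pow_le_of_basis {A ι : Type} [CommRing A] [IsDomain A] [Algebra ℤ_[p] A]
    [Fintype ι] (b : Module.Basis ι ℤ_[p] A) {ℓ j : ℕ} (hℓ : ℓ.Prime) {ζ : A}
    (hζ : IsPrimitiveRoot ζ (ℓ ^ j)) : ℓ ^ j ≤ (p ^ 2) ^ Fintype.card ι := by
  have hp : p.Prime := Fact.out
  have : Module.Free ℤ_[p] A := .of_basis b
  have : Module.Finite ℤ_[p] A := .of_basis b
  have hp0 : (p : A) ≠ 0 := by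
    rw [← map_natCast (algebraMap ℤ_[p] A)]
    exact (map_ne_zero_iff _ (FaithfulSMul.algebraMap_injective ℤ_[p] A)).mpr
      (Nat.cast_ne_zero.mpr hp.ne_zero)
  have hpu : ¬IsUnit (p : A) := by
    rw [← map_natCast (algebraMap ℤ_[p] A)]
    exact not_isUnit_algebraMap_of_free PadicInt.irreducible_p.not_isUnit
  simpa using card_le_of_pow_dvd_sub_imp_eq b 2 (fun i : Fin (ℓ ^ j) => ζ ^ (i : ℕ))
    fun a a' h => Fin.ext (hζ.eq_of_sq_dvd_pow_sub_pow hp hℓ hp0 hpu a.2 a'.2 h)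

lemma IsPrimitiveRoot.pow_le_of_finiteDimensional_padic {L : Type} [Field L] [Algebra ℚ_[p] L]
    [FiniteDimensional ℚ_[p] L] {ℓ j : ℕ} (hℓ : ℓ.Prime) {ζ : L}
    (hζ : IsPrimitiveRoot ζ (ℓ ^ j)) : ℓ ^ j ≤ (p ^ 2) ^ Module.finrank ℚ_[p] L := by
  let : Algebra ℤ_[p] L := ((algebraMap ℚ_[p] L).comp (algebraMap ℤ_[p] ℚ_[p])).toAlgebra
  have : IsScalarTower ℤ_[p] ℚ_[p] L := .of_algebraMap_eq fun _ => rfl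
  have : Module.IsTorsionFree ℤ_[p] L := .trans_faithfulSMul ℤ_[p] ℚ_[p] L
  have hint : IsIntegral ℤ_[p] ζ := (hζ.isIntegral (pow_pos hℓ.pos j)).tower_top
  let B := Algebra.adjoin.powerBasis' hint
  have hdim : B.dim ≤ Module.finrank ℚ_[p] L := by
    rw [Algebra.adjoin.powerBasis'_dim,
      ← (minpoly.monic hint).natDegree_map (algebraMap ℤ_[p] ℚ_[p]),
      ← minpoly.isIntegrallyClosed_eq_field_fractions' ℚ_[p] hint]
    exact minpoly.natDegree_le ζ
  have hζA : IsPrimitiveRoot (⟨ζ, Algebra.self_mem_adjoin_singleton ℤ_[p] ζ⟩ :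
      Algebra.adjoin ℤ_[p] {ζ}) (ℓ ^ j) :=
    hζ.of_map_of_injective (f := (Algebra.adjoin ℤ_[p] {ζ}).val) Subtype.val_injective
  calc ℓ ^ j ≤ (p ^ 2) ^ B.dim := by simpa using hζA.pow_le_of_basis B.basis hℓ
    _ ≤ (p ^ 2) ^ Module.finrank ℚ_[p] L :=
      Nat.pow_le_pow_right (pow_pos (Fact.out : p.Prime).pos 2) hdim

lemma Units.pow_pow_eq_one_of_finiteDimensional_padic {L : Type} [Field L] [Algebra ℚ_[p] L]
    [FiniteDimensional ℚ_[p] L] {ℓ j : ℕ} (hℓ : ℓ.Prime) {z : Lˣ} (hz : z ^ ℓ ^ j = 1) :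
    z ^ ℓ ^ (p ^ 2) ^ Module.finrank ℚ_[p] L = 1 := by
  obtain ⟨i, -, hi⟩ := (Nat.dvd_prime_pow hℓ).mp (orderOf_dvd_of_pow_eq_one hz)
  have hζ : IsPrimitiveRoot (z : L) (ℓ ^ i) :=
    IsPrimitiveRoot.coe_units_iff.mpr (hi ▸ IsPrimitiveRoot.orderOf z)
  rw [← orderOf_dvd_iff_pow_eq_one, hi]
  exact pow_dvd_pow ℓ ((Nat.lt_pow_self hℓ.one_lt).le.trans
    (hζ.pow_le_of_finiteDimensional_padic hℓ))

end Padic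

lemma divPart_pow_bijective (p : ℕ) [Fact p.Prime] {ℓ : ℕ} (hℓ : ℓ.Prime) {L : Type} [Field L]
    [Algebra ℚ_[p] L] [FiniteDimensional ℚ_[p] L] :
    Function.Bijective (powMonoidHom ℓ : ↥(divPart ℓ L) →* _) :=
  ⟨pow_injective_iInf_powSub
      ⟨_, fun _ _ hz => Units.pow_pow_eq_one_of_finiteDimensional_padic (p := p) hℓ hz⟩,
    pow_surjective_iInf_powSub (Units.finite_setOf_pow_eq hℓ.pos)⟩

lemma Function.Bijective.powMonoidHom_pow {M : Type} [CommMonoid M] {n : ℕ}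
    (h : Function.Bijective (powMonoidHom n : M →* M)) (m : ℕ) :
    Function.Bijective (powMonoidHom (n ^ m) : M →* M) := by
  have := h.iterate m
  rwa [powMonoidHom, MonoidHom.coe_mk, OneHom.coe_mk, pow_iterate] at this

theorem statement4_general (p ℓ : ℕ) [Fact (Nat.Prime p)] [Fact (Nat.Prime ℓ)]
    (K L : Type) [Field K] [Field L] [Algebra ℚ_[p] K] [FiniteDimensional ℚ_[p] K]
    [Algebra K L] [FiniteDimensional K L] [IsGalois K L]
    (hdeg : ∃ m : ℕ, Module.finrank K L = ℓ ^ m) :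
    Nat.card (tateH0 (fun σ : L ≃ₐ[K] L => galDiv ℓ σ)) = 1 ∧
      Nat.card (tateHm1 (fun σ : L ≃ₐ[K] L => galDiv ℓ σ)) = 1 ∧
      ∀ x : ↥(divPart ℓ L), (∀ σ : L ≃ₐ[K] L, galDiv ℓ σ x = x) →
        ∃ y : ↥(divPart ℓ L), mNorm (fun σ : L ≃ₐ[K] L => galDiv ℓ σ) y = x := by
  obtain ⟨m, hm⟩ := hdeg
  let : Algebra ℚ_[p] L := ((algebraMap K L).comp (algebraMap ℚ_[p] K)).toAlgebra
  have : IsScalarTower ℚ_[p] K L := .of_algebraMap_eq fun _ => rfl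
  have : FiniteDimensional ℚ_[p] L := .trans ℚ_[p] K L
  have hcard : Fintype.card (L ≃ₐ[K] L) = ℓ ^ m := by
    rw [← Nat.card_eq_fintype_card, IsGalois.card_aut_eq_finrank, hm]
  have hbij : Function.Bijective
      (powMonoidHom (Fintype.card (L ≃ₐ[K] L)) : ↥(divPart ℓ L) →* _) :=
    hcard ▸ (divPart_pow_bijective p Fact.out).powMonoidHom_pow m
  exact ⟨natCard_tateH0_eq_one hbij, natCard_tateHm1_eq_one hbij,
    fun x hx => mFixed_le_range_mNorm hbij hx⟩

/-- Let `L/K` be a cyclic Galois extension of `ℓ`-power degree of a finite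
extension `K` of `ℚ_p`, with Galois group `G`, and let `D = ⋂_k (L^×)^{ℓ^k}` be the
`ℓ`-divisible part of `L^×`.  Then `Ĥ⁰(G, D) = 1` and `Ĥ⁻¹(G, D) = 1`; in particular every
element of `D` fixed by `G` is the norm of an element of `D`. -/
theorem statement4 (p ℓ : ℕ) [Fact (Nat.Prime p)] [Fact (Nat.Prime ℓ)]
    (K L : Type) [Field K] [Field L] [Algebra ℚ_[p] K] [FiniteDimensional ℚ_[p] K]
    [Algebra K L] [FiniteDimensional K L] [IsGalois K L] [IsCyclic (L ≃ₐ[K] L)]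
    (hdeg : ∃ m : ℕ, Module.finrank K L = ℓ ^ m) :
    Nat.card (tateH0 (fun σ : L ≃ₐ[K] L => galDiv ℓ σ)) = 1 ∧
      Nat.card (tateHm1 (fun σ : L ≃ₐ[K] L => galDiv ℓ σ)) = 1 ∧
      ∀ x : ↥(divPart ℓ L), (∀ σ : L ≃ₐ[K] L, galDiv ℓ σ x = x) →
        ∃ y : ↥(divPart ℓ L), mNorm (fun σ : L ≃ₐ[K] L => galDiv ℓ σ) y = x :=
  statement4_general p ℓ K L hdeg
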